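/- arXiv:2502.01833 — 3 statements merged into one kernel-verified Lean document; each statement's English description precedes it below -/
import Mathlib

section
/- For positive integers k dividing n, the number of cartesian decompositions of an n-element set into a k-element factor and an (n/k)-element factor equals n!/(k!·(n/k)!). If k does not divide n, there are no such decompositions. -/
/-- A cartesian decomposition of a set `S` is a pair of equivalence relations such that
each class of the first meets each class of the second in exactly one element. -/
def IsCartesianDecomposition {S : Type*} (π₁ π₂ : Setoid S) : Prop :=
  ∀ x y : S, ∃! z : S, π₁.r x z ∧ π₂.r y z

open Equiv Function

lemma decomp_bij {S : Type*} {π₁ π₂ : Setoid S} (h : IsCartesianDecomposition π₁ π₂) :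
    Function.Bijective (fun x : S => (Quotient.mk π₁ x, Quotient.mk π₂ x)) := by
  constructor
  · intro x y hxy
    simp only [Prod.mk.injEq] at hxy
    obtain ⟨h1, h2⟩ := hxy
    rw [Quotient.eq''] at h1 h2
    obtain ⟨z, hz, huniq⟩ := h x x
    exact (huniq x ⟨π₁.refl x, π₂.refl x⟩).trans (huniq y ⟨h1, h2⟩).symm
  · intro p
    obtain ⟨a, b⟩ := p
    obtain ⟨x, rfl⟩ := Quotient.exists_rep a
    obtain ⟨y, rfl⟩ := Quotient.exists_rep b
    obtain ⟨z, ⟨hz1, hz2⟩, _⟩ := h x y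
    refine ⟨z, ?_⟩
    simp only [Prod.mk.injEq]
    exact ⟨(Quotient.eq'').2 (π₁.symm hz1), (Quotient.eq'').2 (π₂.symm hz2)⟩

lemma card_q2 {n k : ℕ} {π₁ π₂ : Setoid (Fin n)} (hcd : IsCartesianDecomposition π₁ π₂)
    (hq1 : Nat.card (Quotient π₁) = k) : k * Nat.card (Quotient π₂) = n := by
  have E₀ := Equiv.ofBijective _ (decomp_bij hcd)
  have h := Nat.card_congr E₀
  simp only [Nat.card_prod, Nat.card_eq_fintype_card, Fintype.card_fin, hq1] at h
  omega

lemma exists_section (n k m : ℕ) (hnm : n = k * m) (hk : 0 < k)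
    {π₁ π₂ : Setoid (Fin n)} (hcd : IsCartesianDecomposition π₁ π₂)
    (hq1 : Nat.card (Quotient π₁) = k) :
    ∃ e : Fin n ≃ Fin k × Fin m,
      (∀ x y, (e x).1 = (e y).1 ↔ π₁.r x y) ∧ (∀ x y, (e x).2 = (e y).2 ↔ π₂.r x y) := by
  have hq2 : Nat.card (Quotient π₂) = m :=
    Nat.eq_of_mul_eq_mul_left hk ((card_q2 hcd hq1).trans hnm)
  have q₁ : Quotient π₁ ≃ Fin k := Finite.equivFinOfCardEq hq1
  have q₂ : Quotient π₂ ≃ Fin m := Finite.equivFinOfCardEq hq2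
  refine ⟨(Equiv.ofBijective _ (decomp_bij hcd)).trans (q₁.prodCongr q₂),
    fun x y => ?_, fun x y => ?_⟩
  · simp only [Equiv.trans_apply, Equiv.ofBijective_apply, Equiv.prodCongr_apply, Prod.map_fst,
      Function.comp_apply, q₁.injective.eq_iff]
    exact Quotient.eq''
  · simp only [Equiv.trans_apply, Equiv.ofBijective_apply, Equiv.prodCongr_apply, Prod.map_snd,
      Function.comp_apply, q₂.injective.eq_iff]
    exact Quotient.eq''

lemma mk_decomp {n k m : ℕ} (hm : 0 < m) (e : Fin n ≃ Fin k × Fin m) :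
    IsCartesianDecomposition (Setoid.ker (fun x => (e x).1)) (Setoid.ker (fun x => (e x).2)) ∧
    Nat.card (Quotient (Setoid.ker fun x => (e x).1)) = k := by
  constructor
  · intro x y
    refine ⟨e.symm ((e x).1, (e y).2), ?_, ?_⟩
    · constructor
      · show (e x).1 = (e _).1
        rw [e.apply_symm_apply]
      · show (e y).2 = (e _).2
        rw [e.apply_symm_apply]
    · intro z ⟨h1, h2⟩
      have h1' : (e x).1 = (e z).1 := h1
      have h2' : (e y).2 = (e z).2 := h2
      apply e.injective
      rw [e.apply_symm_apply, h1', h2']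
  · have hsurj : Function.Surjective (fun x => (e x).1) := by
      intro a
      exact ⟨e.symm (a, ⟨0, hm⟩), by simp⟩
    rw [Nat.card_congr (Setoid.quotientKerEquivOfSurjective _ hsurj)]
    simp

/-- For positive `k` dividing `n`, the number of cartesian decompositions of an
`n`-element set with `k`-element first factor equals `n!/(k!(n/k)!)`;
if `k` does not divide `n`, there are none. -/
theorem card_cartesian_decompositions (n k : ℕ) (hn : 0 < n) (hk : 0 < k) :
    (k ∣ n →
      Nat.card {d : Setoid (Fin n) × Setoid (Fin n) //
          IsCartesianDecomposition d.1 d.2 ∧ Nat.card (Quotient d.1) = k}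
        = Nat.factorial n / (Nat.factorial k * Nat.factorial (n / k))) ∧
    (¬ k ∣ n →
      Nat.card {d : Setoid (Fin n) × Setoid (Fin n) //
          IsCartesianDecomposition d.1 d.2 ∧ Nat.card (Quotient d.1) = k} = 0) := by
  constructor
  · intro hdvd
    set m := n / k with hmdef
    have hnm : n = k * m := (Nat.mul_div_cancel' hdvd).symm
    have hm0 : 0 < m := Nat.div_pos (Nat.le_of_dvd hn hdvd) hk
    set D := {d : Setoid (Fin n) × Setoid (Fin n) //
          IsCartesianDecomposition d.1 d.2 ∧ Nat.card (Quotient d.1) = k} with hD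
    choose s hs1 hs2 using fun d : D => exists_section n k m hnm hk d.2.1 d.2.2
    set Φ : D × Equiv.Perm (Fin k) × Equiv.Perm (Fin m) → (Fin n ≃ Fin k × Fin m) :=
      fun p => (s p.1).trans (p.2.1.prodCongr p.2.2) with hΦ
    have key1 : ∀ (d : D) (σ : Perm (Fin k)) (τ : Perm (Fin m)) (a b : Fin n),
        (((s d).trans (σ.prodCongr τ)) a).1 = (((s d).trans (σ.prodCongr τ)) b).1 ↔
          d.1.1.r a b := by
      intro d σ τ a b
      simp only [Equiv.trans_apply, Equiv.prodCongr_apply, Prod.map_fst, Function.comp_apply,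
        σ.injective.eq_iff]
      exact hs1 d a b
    have key2 : ∀ (d : D) (σ : Perm (Fin k)) (τ : Perm (Fin m)) (a b : Fin n),
        (((s d).trans (σ.prodCongr τ)) a).2 = (((s d).trans (σ.prodCongr τ)) b).2 ↔
          d.1.2.r a b := by
      intro d σ τ a b
      simp only [Equiv.trans_apply, Equiv.prodCongr_apply, Prod.map_snd, Function.comp_apply,
        τ.injective.eq_iff]
      exact hs2 d a b
    have hbij : Function.Bijective Φ := by
      constructor
      · rintro ⟨d, σ, τ⟩ ⟨d', σ', τ'⟩ hpq
        simp only [hΦ] at hpq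
        have hd : d = d' := by
          apply Subtype.ext
          apply Prod.ext
          · apply Setoid.ext
            intro a b
            rw [← key1 d σ τ a b, ← key1 d' σ' τ' a b, hpq]
          · apply Setoid.ext
            intro a b
            rw [← key2 d σ τ a b, ← key2 d' σ' τ' a b, hpq]
        subst hd
        have hcc : σ.prodCongr τ = σ'.prodCongr τ' := by
          have h2 := congrArg (fun E => (s d).symm.trans E) hpq
          simpa only [← Equiv.trans_assoc, Equiv.symm_trans_self, Equiv.refl_trans] using h2
        have hσ : σ = σ' := by
          apply Equiv.ext; intro a
          have := congrArg (fun E => (E (a, (⟨0, hm0⟩ : Fin m))).1) hcc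
          simpa using this
        have hτ : τ = τ' := by
          apply Equiv.ext; intro b
          have := congrArg (fun E => (E ((⟨0, hk⟩ : Fin k), b)).2) hcc
          simpa using this
        rw [hσ, hτ]
      · intro e
        obtain ⟨hcd, hcard⟩ := mk_decomp hm0 e
        set d : D := ⟨(Setoid.ker (fun x => (e x).1), Setoid.ker (fun x => (e x).2)),
          hcd, hcard⟩ with hd
        set c : Fin k × Fin m ≃ Fin k × Fin m := (s d).symm.trans e with hc
        have keyc1 : ∀ p q : Fin k × Fin m, (c p).1 = (c q).1 ↔ p.1 = q.1 := by
          intro p q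
          have h1 := hs1 d ((s d).symm p) ((s d).symm q)
          rw [Equiv.apply_symm_apply, Equiv.apply_symm_apply] at h1
          have h2 : d.1.1.r ((s d).symm p) ((s d).symm q) ↔
              (e ((s d).symm p)).1 = (e ((s d).symm q)).1 := Setoid.ker_def
          simp only [hc, Equiv.trans_apply]
          rw [← h2, ← h1]
        have keyc2 : ∀ p q : Fin k × Fin m, (c p).2 = (c q).2 ↔ p.2 = q.2 := by
          intro p q
          have h1 := hs2 d ((s d).symm p) ((s d).symm q)
          rw [Equiv.apply_symm_apply, Equiv.apply_symm_apply] at h1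
          have h2 : d.1.2.r ((s d).symm p) ((s d).symm q) ↔
              (e ((s d).symm p)).2 = (e ((s d).symm q)).2 := Setoid.ker_def
          simp only [hc, Equiv.trans_apply]
          rw [← h2, ← h1]
        have hσinj : Function.Injective (fun a : Fin k => (c (a, ⟨0, hm0⟩)).1) := by
          intro a a' h
          exact (keyc1 (a, ⟨0, hm0⟩) (a', ⟨0, hm0⟩)).mp h
        have hτinj : Function.Injective (fun b : Fin m => (c (⟨0, hk⟩, b)).2) := by
          intro b b' h
          exact (keyc2 (⟨0, hk⟩, b) (⟨0, hk⟩, b')).mp h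
        set σ : Perm (Fin k) := Equiv.ofBijective _ (Finite.injective_iff_bijective.mp hσinj)
        set τ : Perm (Fin m) := Equiv.ofBijective _ (Finite.injective_iff_bijective.mp hτinj)
        refine ⟨⟨d, σ, τ⟩, ?_⟩
        simp only [hΦ]
        have hce : σ.prodCongr τ = c := by
          apply Equiv.ext
          rintro ⟨a, b⟩
          apply Prod.ext
          · show σ a = (c (a, b)).1
            exact (keyc1 (a, ⟨0, hm0⟩) (a, b)).mpr rfl
          · show τ b = (c (a, b)).2
            exact (keyc2 (⟨0, hk⟩, b) (a, b)).mpr rfl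
        rw [hce, hc, ← Equiv.trans_assoc, Equiv.self_trans_symm, Equiv.refl_trans]
    have hcards : Nat.card D * (Nat.factorial k * Nat.factorial m) = Nat.factorial n := by
      have h := Nat.card_congr (Equiv.ofBijective Φ hbij)
      rw [Nat.card_prod, Nat.card_prod] at h
      have hE : Nat.card (Fin n ≃ Fin k × Fin m) = Nat.factorial n := by
        rw [Nat.card_eq_fintype_card,
          Fintype.card_equiv ((finCongr hnm).trans finProdFinEquiv.symm)]
        simp
      have hP1 : Nat.card (Perm (Fin k)) = Nat.factorial k := by
        simp [Nat.card_eq_fintype_card, Fintype.card_perm]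
      have hP2 : Nat.card (Perm (Fin m)) = Nat.factorial m := by
        simp [Nat.card_eq_fintype_card, Fintype.card_perm]
      rw [hE, hP1, hP2, ← mul_assoc] at h
      rw [← mul_assoc]
      exact h
    have hpos : 0 < Nat.factorial k * Nat.factorial m :=
      Nat.mul_pos (Nat.factorial_pos k) (Nat.factorial_pos m)
    exact (Nat.div_eq_of_eq_mul_left hpos hcards.symm).symm
  · intro hdvd
    have : IsEmpty {d : Setoid (Fin n) × Setoid (Fin n) //
        IsCartesianDecomposition d.1 d.2 ∧ Nat.card (Quotient d.1) = k} :=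
      ⟨fun d => hdvd ⟨_, (card_q2 d.2.1 d.2.2).symm⟩⟩
    exact Nat.card_of_isEmpty
end

section
/- Let F and G be species (functors from the groupoid of finite sets to sets) with all F(n), G(n) finite, and define their Dirichlet product by (F ·_D G)(S) = Σ over cartesian decompositions (π₁,π₂) of S of F(S₁) × G(S₂). Then for n ≥ 1, |(F ·_D G)(n)| = Σ_{k | n} (n! / (k! (n/k)!)) · |F(k)| · |G(n/k)|. -/
/-- The value of the Dirichlet product of two species `F` and `G` on the set `Fin n`:
a choice of cartesian decomposition of `Fin n` together with an `F`-structure on the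
first factor and a `G`-structure on the second. -/
def DirichletProd (F G : Type → Type) (n : ℕ) : Type :=
  Σ d : {d : Setoid (Fin n) × Setoid (Fin n) // IsCartesianDecomposition d.1 d.2},
    F (Quotient d.1.1) × G (Quotient d.1.2)

lemma cd_bijective {S : Type*} {π₁ π₂ : Setoid S} (h : IsCartesianDecomposition π₁ π₂) :
    Function.Bijective (fun x : S => ((Quotient.mk π₁ x, Quotient.mk π₂ x))) := by
  constructor
  · intro x y hxy
    have h1 : π₁.r x y := Quotient.exact (congrArg Prod.fst hxy)
    have h2 : π₂.r x y := Quotient.exact (congrArg Prod.snd hxy)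
    obtain ⟨z, _, hz⟩ := h x x
    rw [hz y ⟨h1, h2⟩, hz x ⟨π₁.refl x, π₂.refl x⟩]
  · rintro ⟨a, b⟩
    obtain ⟨x, rfl⟩ := Quotient.exists_rep a
    obtain ⟨y, rfl⟩ := Quotient.exists_rep b
    obtain ⟨z, ⟨hz1, hz2⟩, _⟩ := h x y
    exact ⟨z, Prod.ext (Quotient.sound hz1).symm (Quotient.sound hz2).symm⟩

noncomputable def cdEquiv {S : Type*} {π₁ π₂ : Setoid S} (h : IsCartesianDecomposition π₁ π₂) :
    S ≃ Quotient π₁ × Quotient π₂ := Equiv.ofBijective _ (cd_bijective h)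

instance (n : ℕ) : Finite (Setoid (Fin n)) :=
  Finite.of_injective (fun s => s.r) (fun _ _ h => Setoid.ext fun x y =>
    iff_of_eq (congrFun (congrFun h x) y))

lemma key_facts {n : ℕ} (hn : 1 ≤ n) {π₁ π₂ : Setoid (Fin n)}
    (h : IsCartesianDecomposition π₁ π₂) :
    Nat.card (Quotient π₁) ∈ n.divisors ∧
      Nat.card (Quotient π₂) = n / Nat.card (Quotient π₁) := by
  have hcard : n = Nat.card (Quotient π₁) * Nat.card (Quotient π₂) := by
    rw [← Nat.card_prod, ← Nat.card_congr (cdEquiv h), Nat.card_eq_fintype_card,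
      Fintype.card_fin]
  have hk0 : Nat.card (Quotient π₁) ≠ 0 := by
    intro h0; rw [h0, zero_mul] at hcard; omega
  refine ⟨Nat.mem_divisors.mpr ⟨⟨_, hcard⟩, by omega⟩, ?_⟩
  have harith : ∀ a b m : ℕ, a ≠ 0 → m = a * b → b = m / a := fun a b m h0 hh => by
    subst hh; rw [Nat.mul_div_cancel_left _ (Nat.pos_of_ne_zero h0)]
  exact harith _ _ _ hk0 hcard

abbrev CD (n : ℕ) := {d : Setoid (Fin n) × Setoid (Fin n) // IsCartesianDecomposition d.1 d.2}

abbrev CDk (n k : ℕ) := {d : CD n // Nat.card (Quotient d.1.1) = k}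

noncomputable def Phi (n k m : ℕ)
    (t : Σ d : CDk n k, (Quotient d.1.1.1 ≃ Fin k) × (Quotient d.1.1.2 ≃ Fin m)) :
    Fin n ≃ Fin k × Fin m :=
  (cdEquiv t.1.1.2).trans (t.2.1.prodCongr t.2.2)

lemma Phi_apply (n k m : ℕ)
    (t : Σ d : CDk n k, (Quotient d.1.1.1 ≃ Fin k) × (Quotient d.1.1.2 ≃ Fin m)) (x : Fin n) :
    Phi n k m t x = (t.2.1 (Quotient.mk _ x), t.2.2 (Quotient.mk _ x)) := rfl

lemma Phi_bijective (n k m : ℕ) (hk : 0 < k) (hm : 0 < m) :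
    Function.Bijective (Phi n k m) := by
  have hiff1 : ∀ t x y, (t : Σ d : CDk n k,
      (Quotient d.1.1.1 ≃ Fin k) × (Quotient d.1.1.2 ≃ Fin m)).1.1.1.1.r x y ↔
      (Phi n k m t x).1 = (Phi n k m t y).1 := by
    intro t x y
    rw [Phi_apply, Phi_apply]
    simp only [t.2.1.injective.eq_iff]
    exact ⟨fun h => Quotient.sound h, fun h => Quotient.exact h⟩
  have hiff2 : ∀ t x y, (t : Σ d : CDk n k,
      (Quotient d.1.1.1 ≃ Fin k) × (Quotient d.1.1.2 ≃ Fin m)).1.1.1.2.r x y ↔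
      (Phi n k m t x).2 = (Phi n k m t y).2 := by
    intro t x y
    rw [Phi_apply, Phi_apply]
    simp only [t.2.2.injective.eq_iff]
    exact ⟨fun h => Quotient.sound h, fun h => Quotient.exact h⟩
  constructor
  · rintro t t' h
    have happ : ∀ x, Phi n k m t x = Phi n k m t' x := fun x => by rw [h]
    have hd : t.1 = t'.1 := by
      apply Subtype.ext; apply Subtype.ext; apply Prod.ext
      · apply Setoid.ext; intro x y
        rw [show t.1.1.1.1 = (t.1.1.1.1 : Setoid (Fin n)) from rfl]
        constructor
        · intro hxy
          exact (hiff1 t' x y).mpr (by rw [← happ x, ← happ y]; exact (hiff1 t x y).mp hxy)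
        · intro hxy
          exact (hiff1 t x y).mpr (by rw [happ x, happ y]; exact (hiff1 t' x y).mp hxy)
      · apply Setoid.ext; intro x y
        constructor
        · intro hxy
          exact (hiff2 t' x y).mpr (by rw [← happ x, ← happ y]; exact (hiff2 t x y).mp hxy)
        · intro hxy
          exact (hiff2 t x y).mpr (by rw [happ x, happ y]; exact (hiff2 t' x y).mp hxy)
    obtain ⟨d, f, g⟩ := t
    obtain ⟨d', f', g'⟩ := t'
    simp only at hd
    subst hd
    have hf : f = f' := by
      apply Equiv.ext
      intro q
      obtain ⟨x, rfl⟩ := Quotient.exists_rep q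
      exact congrArg Prod.fst (happ x)
    have hg : g = g' := by
      apply Equiv.ext
      intro q
      obtain ⟨x, rfl⟩ := Quotient.exists_rep q
      exact congrArg Prod.snd (happ x)
    rw [hf, hg]
  · intro e
    set π₁ : Setoid (Fin n) :=
      ⟨fun a b => (e a).1 = (e b).1, ⟨fun _ => rfl, Eq.symm, Eq.trans⟩⟩ with hπ₁
    set π₂ : Setoid (Fin n) :=
      ⟨fun a b => (e a).2 = (e b).2, ⟨fun _ => rfl, Eq.symm, Eq.trans⟩⟩ with hπ₂
    have hcd : IsCartesianDecomposition π₁ π₂ := by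
      intro x y
      refine ⟨e.symm ((e x).1, (e y).2), ⟨?_, ?_⟩, ?_⟩
      · show (e x).1 = (e (e.symm ((e x).1, (e y).2))).1
        rw [Equiv.apply_symm_apply]
      · show (e y).2 = (e (e.symm ((e x).1, (e y).2))).2
        rw [Equiv.apply_symm_apply]
      · rintro w ⟨h1, h2⟩
        have h1' : (e x).1 = (e w).1 := h1
        have h2' : (e y).2 = (e w).2 := h2
        apply e.injective
        rw [Equiv.apply_symm_apply, h1', h2']
    have hq1 : Function.Bijective (Quotient.lift (fun x => (e x).1)
        (fun _ _ (h : _ = _) => h) : Quotient π₁ → Fin k) := by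
      constructor
      · intro a b
        obtain ⟨x, rfl⟩ := Quotient.exists_rep a
        obtain ⟨y, rfl⟩ := Quotient.exists_rep b
        exact fun h => Quotient.sound h
      · intro a
        exact ⟨Quotient.mk π₁ (e.symm (a, ⟨0, hm⟩)), by simp⟩
    have hq2 : Function.Bijective (Quotient.lift (fun x => (e x).2)
        (fun _ _ (h : _ = _) => h) : Quotient π₂ → Fin m) := by
      constructor
      · intro a b
        obtain ⟨x, rfl⟩ := Quotient.exists_rep a
        obtain ⟨y, rfl⟩ := Quotient.exists_rep b
        exact fun h => Quotient.sound h
      · intro a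
        exact ⟨Quotient.mk π₂ (e.symm (⟨0, hk⟩, a)), by simp⟩
    set f : Quotient π₁ ≃ Fin k := Equiv.ofBijective _ hq1 with hf
    set g : Quotient π₂ ≃ Fin m := Equiv.ofBijective _ hq2 with hg
    have hkey : Nat.card (Quotient π₁) = k := by
      rw [Nat.card_congr f, Nat.card_eq_fintype_card, Fintype.card_fin]
    refine ⟨⟨⟨⟨(π₁, π₂), hcd⟩, hkey⟩, f, g⟩, ?_⟩
    apply Equiv.ext
    intro x
    exact Prod.ext rfl rfl

lemma card_cd {n k : ℕ} (hn : 1 ≤ n) (hk : k ∈ n.divisors) :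
    Nat.card (CDk n k) = n.factorial / (k.factorial * (n / k).factorial) := by
  classical
  obtain ⟨hdvd, hn0⟩ := Nat.mem_divisors.mp hk
  set m := n / k with hm
  have hk0 : 0 < k := Nat.pos_of_mem_divisors hk
  have hm0 : 0 < m := Nat.div_pos (Nat.le_of_dvd (by omega) hdvd) hk0
  have hkm : k * m = n := Nat.mul_div_cancel' hdvd
  have h1 : Nat.card (Σ d : CDk n k, (Quotient d.1.1.1 ≃ Fin k) × (Quotient d.1.1.2 ≃ Fin m))
      = n.factorial := by
    rw [Nat.card_eq_of_bijective _ (Phi_bijective n k m hk0 hm0)]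
    have e0 : Fin n ≃ Fin k × Fin m := Fintype.equivOfCardEq (by simp [hkm])
    rw [Nat.card_eq_fintype_card, Fintype.card_equiv e0, Fintype.card_fin]
  have h2 : ∀ d : CDk n k, Nat.card ((Quotient d.1.1.1 ≃ Fin k) × (Quotient d.1.1.2 ≃ Fin m))
      = k.factorial * m.factorial := by
    intro d
    have hc1 : Nat.card (Quotient d.1.1.1) = k := d.2
    have hc2 : Nat.card (Quotient d.1.1.2) = m := by
      have h := (key_facts hn d.1.2).2
      rw [hc1] at h
      exact h
    letI : Fintype (Quotient d.1.1.1) := Fintype.ofFinite _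
    letI : Fintype (Quotient d.1.1.2) := Fintype.ofFinite _
    rw [Nat.card_prod, Nat.card_eq_fintype_card,
      Fintype.card_equiv (Finite.equivFinOfCardEq hc1),
      Nat.card_eq_fintype_card, Fintype.card_equiv (Finite.equivFinOfCardEq hc2),
      ← Nat.card_eq_fintype_card, ← Nat.card_eq_fintype_card, hc1, hc2]
  have hfin : Finite (CDk n k) := by infer_instance
  letI : Fintype (CDk n k) := Fintype.ofFinite _
  letI : ∀ d : CDk n k, Fintype ((Quotient d.1.1.1 ≃ Fin k) × (Quotient d.1.1.2 ≃ Fin m)) :=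
    fun d => Fintype.ofFinite _
  have h3 : Nat.card (Σ d : CDk n k, (Quotient d.1.1.1 ≃ Fin k) × (Quotient d.1.1.2 ≃ Fin m))
      = Nat.card (CDk n k) * (k.factorial * m.factorial) := by
    rw [Nat.card_eq_fintype_card, Fintype.card_sigma]
    rw [Finset.sum_congr rfl (fun d _ => by
      rw [← Nat.card_eq_fintype_card, h2 d])]
    rw [Finset.sum_const, Finset.card_univ, ← Nat.card_eq_fintype_card, smul_eq_mul]
  have hpos : 0 < k.factorial * m.factorial :=
    Nat.mul_pos (Nat.factorial_pos _) (Nat.factorial_pos _)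
  rw [← h1, h3, Nat.mul_div_cancel _ hpos]

/-- For species `F`, `G` valued in finite sets, the number of Dirichlet-product
structures on an `n`-element set (`n ≥ 1`) is
`Σ_{k ∣ n} (n!/(k!(n/k)!)) ⬝ |F(k)| ⬝ |G(n/k)|`. -/
theorem card_dirichletProd (F G : Type → Type)
    (hF : ∀ S T : Type, S ≃ T → Nonempty (F S ≃ F T))
    (hG : ∀ S T : Type, S ≃ T → Nonempty (G S ≃ G T))
    (hFfin : ∀ S : Type, Finite S → Finite (F S))
    (hGfin : ∀ S : Type, Finite S → Finite (G S))
    (n : ℕ) (hn : 1 ≤ n) :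
    Nat.card (DirichletProd F G n)
      = ∑ k ∈ n.divisors,
          Nat.factorial n / (Nat.factorial k * Nat.factorial (n / k))
            * Nat.card (F (Fin k)) * Nat.card (G (Fin (n / k))) := by
  classical
  letI : Fintype (CD n) := Fintype.ofFinite _
  letI : ∀ d : CD n, Fintype (F (Quotient d.1.1) × G (Quotient d.1.2)) := fun d => by
    have h1 := hFfin (Quotient d.1.1) inferInstance
    have h2 := hGfin (Quotient d.1.2) inferInstance
    exact Fintype.ofFinite _
  have hDP : Nat.card (DirichletProd F G n)
      = ∑ d : CD n, Fintype.card (F (Quotient d.1.1) × G (Quotient d.1.2)) := by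
    rw [show DirichletProd F G n
      = (Σ d : CD n, F (Quotient d.1.1) × G (Quotient d.1.2)) from rfl]
    rw [Nat.card_eq_fintype_card, Fintype.card_sigma]
  set key : CD n → ℕ := fun d => Nat.card (Quotient d.1.1) with hkeydef
  have hterm : ∀ d : CD n, Fintype.card (F (Quotient d.1.1) × G (Quotient d.1.2))
      = Nat.card (F (Fin (key d))) * Nat.card (G (Fin (n / key d))) := by
    intro d
    have hfF := hFfin (Quotient d.1.1) inferInstance
    have hfG := hGfin (Quotient d.1.2) inferInstance
    have hc2 : Nat.card (Quotient d.1.2) = n / key d := (key_facts hn d.2).2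
    obtain ⟨eF⟩ := hF (Quotient d.1.1) (Fin (key d)) (Finite.equivFinOfCardEq rfl)
    obtain ⟨eG⟩ := hG (Quotient d.1.2) (Fin (n / key d)) (Finite.equivFinOfCardEq hc2)
    rw [← Nat.card_eq_fintype_card, Nat.card_prod, Nat.card_congr eF, Nat.card_congr eG]
  have hmaps : ∀ d ∈ Finset.univ, key d ∈ n.divisors := fun d _ => (key_facts hn d.2).1
  rw [hDP, Finset.sum_congr rfl (fun d _ => hterm d),
    ← Finset.sum_fiberwise_of_maps_to hmaps
      (fun d => Nat.card (F (Fin (key d))) * Nat.card (G (Fin (n / key d))))]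
  refine Finset.sum_congr rfl (fun k hk => ?_)
  rw [Finset.sum_congr rfl (fun d hd => by
      rw [(Finset.mem_filter.mp hd).2]),
    Finset.sum_const, smul_eq_mul]
  have hcardfilter : (Finset.univ.filter (fun d => key d = k)).card
      = Nat.card (CDk n k) := by
    rw [Nat.card_eq_fintype_card, Fintype.card_subtype]
  rw [hcardfilter, card_cd hn hk, mul_assoc]
end

section
/- If F and G are tame Dirichlet species (species valued in finite sets with F(∅) = G(∅) = ∅), then the Dirichlet series of their Dirichlet product is the product of their Dirichlet series: Σ_{n≥1} |(F·_D G)(n)|/n! · n^{-s} = (Σ_{n≥1} |F(n)|/n! · n^{-s})·(Σ_{n≥1} |G(n)|/n! · n^{-s}) as formal Dirichlet series. -/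
/-- The Dirichlet series of a tame species, as a formal Dirichlet series
(arithmetic function): the coefficient of `n ^ (-s)` is `|F(n)|/n!`. -/
noncomputable def dirichletSeriesOf (F : ℕ → ℕ) : ArithmeticFunction ℚ :=
  ⟨fun n => if n = 0 then 0 else (F n : ℚ) / Nat.factorial n, by simp⟩

section Aux

instance {S : Type*} [Finite S] : Finite (Setoid S) :=
  Finite.of_injective (fun s => s.r) (fun a b h => by cases a; cases b; congr)

/-- The canonical bijection associated to a cartesian decomposition. -/
noncomputable def cartEquiv {S : Type*} {π₁ π₂ : Setoid S}
    (h : IsCartesianDecomposition π₁ π₂) : S ≃ Quotient π₁ × Quotient π₂ :=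
  Equiv.ofBijective (fun z => (Quotient.mk π₁ z, Quotient.mk π₂ z)) (by
    constructor
    · intro z w hzw
      obtain ⟨u, _, hu⟩ := h z z
      have h1 : π₁.r z w := Quotient.exact (congrArg Prod.fst hzw)
      have h2 : π₂.r z w := Quotient.exact (congrArg Prod.snd hzw)
      exact (hu z ⟨π₁.refl z, π₂.refl z⟩).trans (hu w ⟨h1, h2⟩).symm
    · rintro ⟨q₁, q₂⟩
      obtain ⟨x, rfl⟩ := Quotient.exists_rep q₁
      obtain ⟨y, rfl⟩ := Quotient.exists_rep q₂
      obtain ⟨z, ⟨hz1, hz2⟩, -⟩ := h x y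
      exact ⟨z, by simp [Quotient.sound hz1, Quotient.sound hz2]⟩)

@[simp] lemma cartEquiv_apply {S : Type*} {π₁ π₂ : Setoid S}
    (h : IsCartesianDecomposition π₁ π₂) (z : S) :
    cartEquiv h z = (Quotient.mk π₁ z, Quotient.mk π₂ z) := rfl

/-- Quotient by the kernel of a surjective map. -/
noncomputable def kerEquiv {α β : Type*} (f : α → β) (hf : Function.Surjective f) :
    Quotient (Setoid.ker f) ≃ β :=
  Equiv.ofBijective (Quotient.lift f fun _ _ h => h) (by
    constructor
    · intro a b
      induction a using Quotient.ind
      induction b using Quotient.ind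
      exact fun h => Quotient.sound h
    · intro b; obtain ⟨a, rfl⟩ := hf b; exact ⟨Quotient.mk _ a, rfl⟩)

@[simp] lemma kerEquiv_mk {α β : Type*} (f : α → β) (hf : Function.Surjective f) (a : α) :
    kerEquiv f hf (Quotient.mk _ a) = f a := rfl

variable {n a b : ℕ}

/-- The index type of `DirichletProd`. -/
abbrev AD (n : ℕ) := {d : Setoid (Fin n) × Setoid (Fin n) // IsCartesianDecomposition d.1 d.2}

lemma card_mul_card (d : AD n) :
    Nat.card (Quotient d.1.1) * Nat.card (Quotient d.1.2) = n := by
  rw [← Nat.card_prod, Nat.card_congr (cartEquiv d.2).symm]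
  simp

/-- Decompositions with prescribed shape. -/
abbrev ShapedD (n a b : ℕ) :=
  {d : AD n // Nat.card (Quotient d.1.1) = a ∧ Nat.card (Quotient d.1.2) = b}

noncomputable def shapeEquiv (ha : a ≠ 0) (hb : b ≠ 0) :
    (Σ d : ShapedD n a b, (Quotient d.1.1.1 ≃ Fin a) × (Quotient d.1.1.2 ≃ Fin b))
      ≃ (Fin n ≃ Fin a × Fin b) :=
  Equiv.ofBijective
    (fun p => (cartEquiv p.1.1.2).trans (Equiv.prodCongr p.2.1 p.2.2)) (by
    constructor
    · rintro ⟨⟨⟨⟨π₁, π₂⟩, hc⟩, hs⟩, e₁, e₂⟩ ⟨⟨⟨⟨π₁', π₂'⟩, hc'⟩, hs'⟩, e₁', e₂'⟩ hE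
      have hf1 : ∀ z, e₁ (Quotient.mk π₁ z) = e₁' (Quotient.mk π₁' z) :=
        fun z => congrArg Prod.fst (DFunLike.congr_fun hE z)
      have hf2 : ∀ z, e₂ (Quotient.mk π₂ z) = e₂' (Quotient.mk π₂' z) :=
        fun z => congrArg Prod.snd (DFunLike.congr_fun hE z)
      have h1 : π₁ = π₁' := by
        apply Setoid.ext; intro x z
        constructor
        · intro h
          refine Quotient.exact (e₁'.injective ?_)
          rw [← hf1 x, ← hf1 z]
          exact congrArg e₁ (Quotient.sound h)
        · intro h
          refine Quotient.exact (e₁.injective ?_)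
          rw [hf1 x, hf1 z]
          exact congrArg e₁' (Quotient.sound h)
      have h2 : π₂ = π₂' := by
        apply Setoid.ext; intro x z
        constructor
        · intro h
          refine Quotient.exact (e₂'.injective ?_)
          rw [← hf2 x, ← hf2 z]
          exact congrArg e₂ (Quotient.sound h)
        · intro h
          refine Quotient.exact (e₂.injective ?_)
          rw [hf2 x, hf2 z]
          exact congrArg e₂' (Quotient.sound h)
      subst h1; subst h2
      have he1 : e₁ = e₁' := by
        apply Equiv.ext; intro q
        induction q using Quotient.ind
        exact hf1 _
      have he2 : e₂ = e₂' := by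
        apply Equiv.ext; intro q
        induction q using Quotient.ind
        exact hf2 _
      subst he1; subst he2
      rfl
    · intro E
      have hs1 : Function.Surjective (fun z : Fin n => (E z).1) := by
        intro x
        obtain ⟨y⟩ : Nonempty (Fin b) := Fin.pos_iff_nonempty.1 (Nat.pos_of_ne_zero hb)
        exact ⟨E.symm (x, y), by simp⟩
      have hs2 : Function.Surjective (fun z : Fin n => (E z).2) := by
        intro y
        obtain ⟨x⟩ : Nonempty (Fin a) := Fin.pos_iff_nonempty.1 (Nat.pos_of_ne_zero ha)
        exact ⟨E.symm (x, y), by simp⟩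
      refine ⟨⟨⟨⟨⟨Setoid.ker fun z => (E z).1, Setoid.ker fun z => (E z).2⟩, ?_⟩, ?_, ?_⟩,
        kerEquiv _ hs1, kerEquiv _ hs2⟩, ?_⟩
      · intro x y
        refine ⟨E.symm ((E x).1, (E y).2), ⟨?_, ?_⟩, ?_⟩
        · show (E x).1 = (E (E.symm _)).1; simp
        · show (E y).2 = (E (E.symm _)).2; simp
        · rintro w ⟨hw1, hw2⟩
          apply E.injective
          simp only [Equiv.apply_symm_apply]
          exact Prod.ext hw1.symm hw2.symm
      · rw [Nat.card_congr (kerEquiv _ hs1)]; simp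
      · rw [Nat.card_congr (kerEquiv _ hs2)]; simp
      · exact Equiv.ext fun z => rfl)

lemma nat_card_sigma {ι : Type*} [Fintype ι] (β : ι → Type*) [∀ i, Finite (β i)] :
    Nat.card (Sigma β) = ∑ i, Nat.card (β i) := by
  classical
  haveI : ∀ i, Fintype (β i) := fun i => Fintype.ofFinite _
  simp [Nat.card_eq_fintype_card, Fintype.card_sigma]

lemma card_equiv_fin {α : Type*} [Finite α] {a : ℕ} (h : Nat.card α = a) :
    Nat.card (α ≃ Fin a) = a.factorial := by
  classical
  cases nonempty_fintype α
  have e : α ≃ Fin a := Fintype.equivFinOfCardEq (by rwa [← Nat.card_eq_fintype_card])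
  rw [Nat.card_eq_fintype_card, Fintype.card_equiv e, ← Nat.card_eq_fintype_card, h]

lemma count_key (hn : n ≠ 0) (hab : a * b = n) :
    (Nat.card (ShapedD n a b)) * (a.factorial * b.factorial) = n.factorial := by
  classical
  have ha : a ≠ 0 := by rintro rfl; simp at hab; omega
  have hb : b ≠ 0 := by rintro rfl; simp at hab; omega
  have hR : Nat.card (Fin n ≃ Fin a × Fin b) = n.factorial := by
    have e : Fin n ≃ Fin a × Fin b := (finCongr hab.symm).trans finProdFinEquiv.symm
    rw [Nat.card_eq_fintype_card, Fintype.card_equiv e, Fintype.card_fin]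
  haveI := Fintype.ofFinite (ShapedD n a b)
  have hfib : ∀ d : ShapedD n a b,
      Nat.card ((Quotient d.1.1.1 ≃ Fin a) × (Quotient d.1.1.2 ≃ Fin b))
        = a.factorial * b.factorial := by
    intro d
    rw [Nat.card_prod, card_equiv_fin d.2.1, card_equiv_fin d.2.2]
  calc Nat.card (ShapedD n a b) * (a.factorial * b.factorial)
      = ∑ _d : ShapedD n a b, a.factorial * b.factorial := by
        rw [Finset.sum_const, Finset.card_univ, smul_eq_mul, Nat.card_eq_fintype_card]
    _ = ∑ d : ShapedD n a b,
          Nat.card ((Quotient d.1.1.1 ≃ Fin a) × (Quotient d.1.1.2 ≃ Fin b)) :=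
        Finset.sum_congr rfl fun d _ => (hfib d).symm
    _ = Nat.card (Σ d : ShapedD n a b,
          (Quotient d.1.1.1 ≃ Fin a) × (Quotient d.1.1.2 ≃ Fin b)) := (nat_card_sigma _).symm
    _ = Nat.card (Fin n ≃ Fin a × Fin b) := Nat.card_congr (shapeEquiv ha hb)
    _ = n.factorial := hR

lemma dirichletSeriesOf_apply (F : ℕ → ℕ) (n : ℕ) :
    dirichletSeriesOf F n = if n = 0 then 0 else (F n : ℚ) / Nat.factorial n := rfl

end Aux

/-- For tame Dirichlet species `F` and `G` (finite-set valued, empty on the empty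
set), the Dirichlet series of `F ·_D G` is the product of the Dirichlet series of
`F` and of `G`, as formal Dirichlet series. -/
theorem dirichletSeries_dirichletProd (F G : Type → Type)
    (hF : ∀ S T : Type, S ≃ T → Nonempty (F S ≃ F T))
    (hG : ∀ S T : Type, S ≃ T → Nonempty (G S ≃ G T))
    (hFfin : ∀ S : Type, Finite S → Finite (F S))
    (hGfin : ∀ S : Type, Finite S → Finite (G S))
    (hF0 : IsEmpty (F (Fin 0))) (hG0 : IsEmpty (G (Fin 0))) :
    dirichletSeriesOf (fun n => Nat.card (DirichletProd F G n))
      = dirichletSeriesOf (fun n => Nat.card (F (Fin n)))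
          * dirichletSeriesOf (fun n => Nat.card (G (Fin n))) := by
  classical
  ext n
  rcases eq_or_ne n 0 with rfl | hn
  · simp [ArithmeticFunction.map_zero]
  rw [ArithmeticFunction.mul_apply]
  -- the count of F-structures depends only on the cardinality
  have hFc : ∀ (α : Type) (_ : Finite α), Nat.card (F α) = Nat.card (F (Fin (Nat.card α))) := by
    intro α hα
    cases nonempty_fintype α
    obtain ⟨e⟩ := hF α (Fin (Nat.card α))
      ((Fintype.equivFin α).trans (finCongr Nat.card_eq_fintype_card.symm))
    exact Nat.card_congr e
  have hGc : ∀ (α : Type) (_ : Finite α), Nat.card (G α) = Nat.card (G (Fin (Nat.card α))) := by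
    intro α hα
    cases nonempty_fintype α
    obtain ⟨e⟩ := hG α (Fin (Nat.card α))
      ((Fintype.equivFin α).trans (finCongr Nat.card_eq_fintype_card.symm))
    exact Nat.card_congr e
  haveI : Fintype (AD n) := Fintype.ofFinite _
  haveI hFin1 : ∀ d : AD n, Finite (F (Quotient d.1.1)) := fun d => hFfin _ inferInstance
  haveI hFin2 : ∀ d : AD n, Finite (G (Quotient d.1.2)) := fun d => hGfin _ inferInstance
  -- the natural-number counting identity
  have main : Nat.card (DirichletProd F G n)
      = ∑ p ∈ n.divisorsAntidiagonal,
          Nat.card (ShapedD n p.1 p.2)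
            * (Nat.card (F (Fin p.1)) * Nat.card (G (Fin p.2))) := by
    have step1 : Nat.card (DirichletProd F G n)
        = ∑ d : AD n, Nat.card (F (Quotient d.1.1)) * Nat.card (G (Quotient d.1.2)) := by
      refine (nat_card_sigma _).trans (Finset.sum_congr rfl fun d _ => Nat.card_prod _ _)
    have hmaps : ∀ d ∈ (Finset.univ : Finset (AD n)),
        (Nat.card (Quotient d.1.1), Nat.card (Quotient d.1.2)) ∈ n.divisorsAntidiagonal := by
      intro d _
      rw [Nat.mem_divisorsAntidiagonal]
      exact ⟨card_mul_card d, hn⟩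
    rw [step1, ← Finset.sum_fiberwise_of_maps_to hmaps]
    refine Finset.sum_congr rfl fun p hp => ?_
    have inner : ∀ d ∈ Finset.univ.filter (fun d : AD n =>
        (Nat.card (Quotient d.1.1), Nat.card (Quotient d.1.2)) = p),
        Nat.card (F (Quotient d.1.1)) * Nat.card (G (Quotient d.1.2))
          = Nat.card (F (Fin p.1)) * Nat.card (G (Fin p.2)) := by
      intro d hd
      rw [Finset.mem_filter] at hd
      rw [hFc _ inferInstance, hGc _ inferInstance, ← hd.2]
    rw [Finset.sum_congr rfl inner, Finset.sum_const, smul_eq_mul]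
    congr 1
    rw [← Fintype.card_subtype, ← Nat.card_eq_fintype_card]
    exact Nat.card_congr (Equiv.subtypeEquivRight fun d => Prod.ext_iff)
  have key : ∀ p ∈ n.divisorsAntidiagonal,
      dirichletSeriesOf (fun k => Nat.card (F (Fin k))) p.1
        * dirichletSeriesOf (fun k => Nat.card (G (Fin k))) p.2
      = (Nat.card (ShapedD n p.1 p.2)
          * (Nat.card (F (Fin p.1)) * Nat.card (G (Fin p.2))) : ℕ) / (n.factorial : ℚ) := by
    intro p hp
    rw [Nat.mem_divisorsAntidiagonal] at hp
    have hp1 : p.1 ≠ 0 := by intro h; rw [h] at hp; simp at hp; omega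
    have hp2 : p.2 ≠ 0 := by intro h; rw [h] at hp; simp at hp; omega
    have hcount : ((Nat.card (ShapedD n p.1 p.2) : ℚ))
        * (p.1.factorial * p.2.factorial) = n.factorial := by
      exact_mod_cast congrArg (Nat.cast : ℕ → ℚ) (count_key hn hp.1)
    rw [dirichletSeriesOf_apply, dirichletSeriesOf_apply, if_neg hp1, if_neg hp2]
    push_cast
    rw [div_mul_div_comm, div_eq_div_iff (by positivity) (by positivity)]
    linear_combination (-(Nat.card (F (Fin p.1)) * Nat.card (G (Fin p.2))) : ℚ) * hcount
  rw [Finset.sum_congr rfl key, ← Finset.sum_div, dirichletSeriesOf_apply, if_neg hn, main]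
  push_cast
  ring
end
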